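/- Let G be a group normally generated by m_1,…,m_k, in which each m_i commutes with all of its conjugates (i.e., [m_i^f, m_i^g] = 1 for all f,g ∈ G and all i). Then any left-normed commutator [y_1, y_2, …, y_{k+2}] of weight k+2 in conjugates of the generators m_1,…,m_k is trivial, so G^{k+2} = 1. -/

import Mathlib

open scoped commutatorElement

/-- The centralizer of a normal subgroup is normal. -/
lemma centralizer_normal_aux {G : Type*} [Group G] (N : Subgroup G) [hN : N.Normal] :
    (Subgroup.centralizer (N : Set G)).Normal := by
  constructor
  intro x hx g
  rw [Subgroup.mem_centralizer_iff] at hx ⊢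
  intro n hn
  have hn' : g⁻¹ * n * g ∈ N := by simpa using hN.conj_mem n hn g⁻¹
  have h := hx _ hn'
  have h2 : n * (g * x * g⁻¹) = g * (g⁻¹ * n * g * x) * g⁻¹ := by group
  rw [h2, h]
  group

/-- If elements of `s` pairwise commute, then `closure s` is contained in its own
centralizer. -/
lemma closure_le_centralizer_closure_aux {G : Type*} [Group G] {s : Set G}
    (hs : ∀ a ∈ s, ∀ b ∈ s, a * b = b * a) :
    Subgroup.closure s ≤ Subgroup.centralizer (Subgroup.closure s : Set G) := by
  rw [Subgroup.closure_le]
  intro a ha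
  rw [SetLike.mem_coe, Subgroup.mem_centralizer_iff]
  intro h hh
  have key : Subgroup.closure s ≤ Subgroup.centralizer ({a} : Set G) := by
    rw [Subgroup.closure_le]
    intro b hb
    rw [SetLike.mem_coe, Subgroup.mem_centralizer_singleton_iff]
    exact (hs a ha b hb).symm
  have := key hh
  rw [Subgroup.mem_centralizer_singleton_iff] at this
  exact this

universe u

theorem milnor_aux : ∀ (k : ℕ) (G : Type u) [Group G] (m : Fin k → G),
    Subgroup.normalClosure (Set.range m) = ⊤ →
    (∀ (i : Fin k) (f g : G), ⁅f⁻¹ * m i * f, g⁻¹ * m i * g⁆ = 1) →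
    (⊤ : Subgroup G).lowerCentralSeries (k + 1) = ⊥ := by
  intro k
  induction k with
  | zero =>
    intro G _ m hgen hrel
    have h1 : (⊤ : Subgroup G) ≤ ⊥ := by
      rw [← hgen]
      apply Subgroup.normalClosure_le_normal
      rw [Set.range_eq_empty m]
      exact Set.empty_subset _
    exact le_antisymm (le_trans le_top h1) bot_le
  | succ k ih =>
    intro G _ m hgen hrel
    -- each normal closure N i is abelian
    have habel : ∀ i : Fin (k + 1), Subgroup.normalClosure ({m i} : Set G) ≤
        Subgroup.centralizer ((Subgroup.normalClosure ({m i} : Set G)) : Set G) := by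
      intro i
      apply closure_le_centralizer_closure_aux
      intro a ha b hb
      rw [Group.mem_conjugatesOfSet_iff] at ha hb
      obtain ⟨a', ha', hca⟩ := ha
      obtain ⟨b', hb', hcb⟩ := hb
      rw [Set.mem_singleton_iff] at ha' hb'
      subst ha'; subst hb'
      obtain ⟨c, hc⟩ := isConj_iff.mp hca
      obtain ⟨d, hd⟩ := isConj_iff.mp hcb
      have := hrel i c⁻¹ d⁻¹
      simp only [inv_inv] at this
      rw [commutatorElement_eq_one_iff_mul_comm] at this
      rw [← hc, ← hd]
      exact this
    -- main step: lcs G (k+1) is contained in the centralizer of each N i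
    have hC : ∀ i : Fin (k + 1), (⊤ : Subgroup G).lowerCentralSeries (k + 1) ≤
        Subgroup.centralizer ((Subgroup.normalClosure ({m i} : Set G)) : Set G) := by
      intro i
      set N : Subgroup G := Subgroup.normalClosure ({m i} : Set G) with hN
      set C : Subgroup G := Subgroup.centralizer (N : Set G) with hCdef
      haveI : C.Normal := centralizer_normal_aux N
      have hmiC : m i ∈ C := habel i (Subgroup.subset_normalClosure rfl)
      let π : G →* G ⧸ C := QuotientGroup.mk' C
      have hπsurj : Function.Surjective π := QuotientGroup.mk'_surjective C
      let m' : Fin k → G ⧸ C := fun j => π (m (i.succAbove j))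
      have hgen' : Subgroup.normalClosure (Set.range m') = ⊤ := by
        rw [eq_top_iff, ← Subgroup.map_top_of_surjective π hπsurj, ← hgen]
        rw [Subgroup.map_le_iff_le_comap]
        haveI : (Subgroup.comap π (Subgroup.normalClosure (Set.range m'))).Normal :=
          Subgroup.Normal.comap inferInstance π
        apply Subgroup.normalClosure_le_normal
        rintro _ ⟨j, rfl⟩
        rw [SetLike.mem_coe, Subgroup.mem_comap]
        by_cases hji : j = i
        · subst hji
          have : π (m j) = 1 := by
            rw [← MonoidHom.mem_ker, QuotientGroup.ker_mk']
            exact hmiC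
          rw [this]
          exact Subgroup.one_mem _
        · obtain ⟨j', rfl⟩ := Fin.exists_succAbove_eq hji
          exact Subgroup.subset_normalClosure ⟨j', rfl⟩
      have hrel' : ∀ (j : Fin k) (f g : G ⧸ C),
          ⁅f⁻¹ * m' j * f, g⁻¹ * m' j * g⁆ = 1 := by
        intro j f g
        obtain ⟨f₀, rfl⟩ := hπsurj f
        obtain ⟨g₀, rfl⟩ := hπsurj g
        have e1 : (π f₀)⁻¹ * m' j * π f₀ = π (f₀⁻¹ * m (i.succAbove j) * f₀) := by
          simp [m', map_mul]
        have e2 : (π g₀)⁻¹ * m' j * π g₀ = π (g₀⁻¹ * m (i.succAbove j) * g₀) := by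
          simp [m', map_mul]
        rw [e1, e2, ← map_commutatorElement, hrel, map_one]
      have hQ := ih (G ⧸ C) m' hgen' hrel'
      have hmap := lowerCentralSeries.map π (k + 1)
      rw [hQ] at hmap
      intro x hx
      have : π x ∈ (⊥ : Subgroup (G ⧸ C)) := hmap ⟨x, hx, rfl⟩
      rw [Subgroup.mem_bot, ← MonoidHom.mem_ker, QuotientGroup.ker_mk'] at this
      exact this
    -- deduce lcs G (k+1) is central
    have hcent : ∀ (p : G), p ∈ (⊤ : Subgroup G).lowerCentralSeries (k + 1) → ∀ q : G, p * q = q * p := by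
      intro p hp
      have hTop : (⊤ : Subgroup G) ≤
          Subgroup.centralizer (((⊤ : Subgroup G).lowerCentralSeries (k + 1) : Subgroup G) : Set G) := by
        nth_rewrite 1 [← hgen]
        haveI : (Subgroup.centralizer
            (((⊤ : Subgroup G).lowerCentralSeries (k + 1) : Subgroup G) : Set G)).Normal :=
          centralizer_normal_aux _
        apply Subgroup.normalClosure_le_normal
        rintro _ ⟨i, rfl⟩
        have h1 : Subgroup.normalClosure ({m i} : Set G) ≤
            Subgroup.centralizer (((⊤ : Subgroup G).lowerCentralSeries (k + 1) : Subgroup G) : Set G) :=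
          Subgroup.le_centralizer_iff.mp (hC i)
        exact h1 (Subgroup.subset_normalClosure rfl)
      intro q
      have := hTop (Subgroup.mem_top q)
      rw [Subgroup.mem_centralizer_iff] at this
      exact this p hp
    -- conclude
    rw [eq_bot_iff, lowerCentralSeries_succ, Subgroup.commutator_def, Subgroup.closure_le]
    rintro x ⟨p, hp, q, -, rfl⟩
    rw [SetLike.mem_coe, Subgroup.mem_bot]
    rw [commutatorElement_def, hcent p hp q]
    group

/-- Let `G` be a group normally generated by `m_1,…,m_k` in which each `m_i`
commutes with all of its conjugates (the Milnor relations `[m_i^f, m_i^g] = 1` hold).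
Then every iterated commutator of weight `k+2` vanishes: `G^{k+2} = 1`, i.e.
`lowerCentralSeries G (k+1) = ⊥` in Mathlib's 0-indexed convention. -/
theorem milnor_relations_force_nilpotency (k : ℕ) (G : Type*) [Group G] (m : Fin k → G)
    (hgen : Subgroup.normalClosure (Set.range m) = ⊤)
    (hrel : ∀ (i : Fin k) (f g : G), ⁅f⁻¹ * m i * f, g⁻¹ * m i * g⁆ = 1) :
    (⊤ : Subgroup G).lowerCentralSeries (k + 1) = ⊥ :=
  milnor_aux k G m hgen hrel
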